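/- arXiv:2212.08618 — 3 statements merged into one kernel-verified Lean document; each statement's English description precedes it below -/
import Mathlib

section
/- Let μ be a Radon measure on ℝⁿ and A_μ = {x ∈ supp(μ) : limsup_{r→0⁺} μ(B_r(x))/μ(B_{2r}(x)) ≥ 2^{−n}}. Then μ(ℝⁿ \ A_μ) = 0; i.e., every Radon measure is asymptotically doubling in this weak sense μ-almost everywhere. -/
/-!
If the limsup of `μ(B_r(x))/μ(B_{2r}(x))` is below `2⁻ⁿ`, then `μ(B_r(x)) ≤ c μ(B_{2r}(x))` for
small `r` with `2ⁿ c < 1`. Since Lebesgue measure scales exactly by `2ⁿ`, the density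
`μ(B_r(x))/|B_r|` then shrinks by the factor `2ⁿ c` at each halving of `r`, so it tends to `0`.
By Besicovitch differentiation, `|B_r(x)|/μ(B_r(x))` has a finite limit for `μ`-a.e. `x`, so the
density can tend to `0` only on a `μ`-null set; points outside the support form a null set too.
-/

open MeasureTheory Filter Metric Set Module
open scoped ENNReal Topology

theorem le_pow_mul_of_le_mul_apply_two_mul {f : ℝ → ℝ≥0∞} {t M : ℝ≥0∞} {r₀ : ℝ}
    (hr₀ : 0 ≤ r₀) (hf : ∀ r ∈ Ioc 0 (r₀ / 2), f r ≤ t * f (2 * r))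
    (hM : ∀ r ∈ Ioc (r₀ / 2) r₀, f r ≤ M) (k : ℕ) :
    ∀ r ∈ Ioc (r₀ / 2 ^ (k + 1)) (r₀ / 2 ^ k), f r ≤ t ^ k * M := by
  induction k with
  | zero => simpa using hM
  | succ k ih =>
    rintro r ⟨hr_lo, hr_hi⟩
    have hr₀_div : r₀ / 2 ^ (k + 1 + 1) = r₀ / 2 ^ (k + 1) / 2 := by ring
    have hr₀_div' : r₀ / 2 ^ (k + 1) = r₀ / 2 ^ k / 2 := by ring
    have hr : r ∈ Ioc 0 (r₀ / 2) := by
      refine ⟨lt_of_le_of_lt (by positivity) hr_lo, hr_hi.trans ?_⟩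
      rw [hr₀_div']
      gcongr
      exact div_le_self hr₀ (one_le_pow₀ one_le_two)
    have h2r : 2 * r ∈ Ioc (r₀ / 2 ^ (k + 1)) (r₀ / 2 ^ k) := by
      constructor <;> linarith
    calc f r ≤ t * f (2 * r) := hf r hr
      _ ≤ t * (t ^ k * M) := by gcongr; exact ih _ h2r
      _ = t ^ (k + 1) * M := by ring

theorem tendsto_nhdsGT_zero_of_le_mul_apply_two_mul {f : ℝ → ℝ≥0∞} {t M : ℝ≥0∞} {r₀ : ℝ}
    (hr₀ : 0 < r₀) (ht : t < 1) (hM_ne_top : M ≠ ∞)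
    (hf : ∀ r ∈ Ioc 0 (r₀ / 2), f r ≤ t * f (2 * r))
    (hM : ∀ r ∈ Ioc (r₀ / 2) r₀, f r ≤ M) :
    Tendsto f (𝓝[>] 0) (𝓝 0) := by
  have htM : Tendsto (fun k : ℕ => t ^ k * M) atTop (𝓝 0) := by
    simpa using ENNReal.Tendsto.mul_const (ENNReal.tendsto_pow_atTop_nhds_zero_of_lt_one ht)
      (.inr hM_ne_top)
  refine ENNReal.tendsto_nhds_zero.2 fun ε hε => ?_
  obtain ⟨K, hK⟩ := (htM.eventually (ge_mem_nhds hε)).exists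
  filter_upwards [Ioc_mem_nhdsGT (by positivity : (0 : ℝ) < r₀ / 2 ^ K)] with r ⟨hr, hrK⟩
  have hK_le : (2 : ℝ) ^ K ≤ r₀ / r := by
    rw [le_div_iff₀ hr]; rwa [le_div_iff₀ (by positivity), mul_comm] at hrK
  obtain ⟨k, hk_le, hk_lt⟩ :=
    exists_nat_pow_near (x := r₀ / r) (y := 2) ((one_le_pow₀ one_le_two).trans hK_le) one_lt_two
  have hKk : K ≤ k := Nat.lt_succ_iff.1 <| (pow_lt_pow_iff_right₀ one_lt_two).1 (hK_le.trans_lt hk_lt)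
  have hr_shell : r ∈ Ioc (r₀ / 2 ^ (k + 1)) (r₀ / 2 ^ k) := by
    constructor
    · rwa [div_lt_iff₀ (by positivity), mul_comm, ← div_lt_iff₀ hr]
    · rwa [le_div_iff₀ (by positivity), mul_comm, ← le_div_iff₀ hr]
  calc f r ≤ t ^ k * M := le_pow_mul_of_le_mul_apply_two_mul hr₀.le hf hM k r hr_shell
    _ ≤ t ^ K * M := mul_le_mul' (pow_le_pow_right_of_le_one' ht.le hKk) le_rfl
    _ ≤ ε := hK

theorem exists_lt_eventually_measure_ball_le_mul {X : Type*} [PseudoMetricSpace X]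
    [MeasurableSpace X] {μ : Measure X} {x : X} {a : ℝ≥0∞}
    (h : limsup (fun r : ℝ => μ (ball x r) / μ (ball x (2 * r))) (𝓝[>] 0) < a) :
    ∃ c < a, ∀ᶠ r in 𝓝[>] (0 : ℝ), μ (ball x r) ≤ c * μ (ball x (2 * r)) := by
  obtain ⟨c, hlt, hca⟩ := exists_between h
  have hc₀ : c ≠ 0 := (zero_le.trans_lt hlt).ne'
  refine ⟨c, hca, (eventually_lt_of_limsup_lt hlt).mono fun r hr => ?_⟩
  exact (ENNReal.div_le_iff_le_mul (.inr hca.ne_top) (.inr hc₀)).1 hr.le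

section AddHaar

variable {E : Type*} [NormedAddCommGroup E] [NormedSpace ℝ E] [FiniteDimensional ℝ E]
  [MeasurableSpace E] [BorelSpace E] (ν : Measure E) [ν.IsAddHaarMeasure]

theorem Measure.addHaar_ball_two_mul (x : E) (r : ℝ) :
    ν (ball x (2 * r)) = 2 ^ finrank ℝ E * ν (ball x r) := by
  rw [Measure.addHaar_ball_mul_of_pos ν x two_pos, ← Measure.addHaar_ball_center ν x,
    ENNReal.ofReal_pow zero_le_two, ENNReal.ofReal_ofNat]

theorem tendsto_measure_closedBall_div_addHaar_zero (μ : Measure E) [IsLocallyFiniteMeasure μ]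
    (x : E) (h : limsup (fun r : ℝ => μ (ball x r) / μ (ball x (2 * r))) (𝓝[>] 0) <
      (2 ^ finrank ℝ E)⁻¹) :
    Tendsto (fun r => μ (closedBall x r) / ν (closedBall x r)) (𝓝[>] 0) (𝓝 0) := by
  obtain ⟨c, hc, hev⟩ := exists_lt_eventually_measure_ball_le_mul h
  obtain ⟨r₀, hr₀ : 0 < r₀, hr₀_sub⟩ := mem_nhdsGT_iff_exists_Ioc_subset.1 hev
  -- `μ (ball x (2 * r))` in the numerator makes `f` dominate the closed-ball ratio.
  set f : ℝ → ℝ≥0∞ := fun r => μ (ball x (2 * r)) / ν (ball x r)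
  have h2d : (2 : ℝ≥0∞) ^ finrank ℝ E ≠ 0 := by positivity
  have h2d' : (2 : ℝ≥0∞) ^ finrank ℝ E ≠ ∞ := by simp
  have hf : ∀ r ∈ Ioc 0 (r₀ / 2), f r ≤ (2 ^ finrank ℝ E * c) * f (2 * r) := by
    rintro r ⟨hr, hr_le⟩
    calc f r ≤ c * μ (ball x (2 * (2 * r))) / ν (ball x r) :=
          ENNReal.div_le_div_right (hr₀_sub ⟨by positivity, by linarith⟩) _
      _ = (2 ^ finrank ℝ E * c) * f (2 * r) := by
          rw [← mul_div_assoc, mul_assoc, Measure.addHaar_ball_two_mul ν x r,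
            ENNReal.mul_div_mul_left _ _ h2d h2d']
  have hM : ∀ r ∈ Ioc (r₀ / 2) r₀, f r ≤ μ (ball x (2 * r₀)) / ν (ball x (r₀ / 2)) :=
    fun r ⟨hr_lo, hr_hi⟩ => ENNReal.div_le_div (measure_mono (ball_subset_ball (by linarith)))
      (measure_mono (ball_subset_ball hr_lo.le))
  have hM_ne_top : μ (ball x (2 * r₀)) / ν (ball x (r₀ / 2)) ≠ ∞ :=
    ENNReal.div_ne_top measure_ball_lt_top.ne (measure_ball_pos ν x (by positivity)).ne'
  have ht : 2 ^ finrank ℝ E * c < 1 := ENNReal.mul_lt_of_lt_div' (by rwa [one_div])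
  refine tendsto_of_tendsto_of_tendsto_of_le_of_le' tendsto_const_nhds
    (tendsto_nhdsGT_zero_of_le_mul_apply_two_mul hr₀ ht hM_ne_top hf hM)
    (.of_forall fun _ => zero_le) ?_
  filter_upwards [self_mem_nhdsWithin] with r (hr : 0 < r)
  exact ENNReal.div_le_div (measure_mono (closedBall_subset_ball (by linarith)))
    (measure_mono ball_subset_closedBall)

end AddHaar

theorem measure_setOf_tendsto_measure_closedBall_div_zero {X : Type*} [MetricSpace X]
    [MeasurableSpace X] [BorelSpace X] [SecondCountableTopology X] [HasBesicovitchCovering X]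
    (μ ν : Measure X) [IsLocallyFiniteMeasure μ] [IsLocallyFiniteMeasure ν] [ν.IsOpenPosMeasure] :
    μ {x | Tendsto (fun r => μ (closedBall x r) / ν (closedBall x r)) (𝓝[>] 0) (𝓝 0)} = 0 := by
  refine measure_eq_zero_iff_ae_notMem.2 ?_
  filter_upwards [Besicovitch.ae_tendsto_rnDeriv ν μ, ν.rnDeriv_lt_top μ] with x hlim hfin hzero
  have hfin_ball : ∀ᶠ r in 𝓝[>] (0 : ℝ), ν (closedBall x r) ≠ ∞ :=
    nhdsWithin_le_nhds <| ((tendsto_closedBall_smallSets x).eventually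
      (ν.finiteAt_nhds x).eventually).mono fun _ h => h.ne
  have hinf : Tendsto (fun r => ν (closedBall x r) / μ (closedBall x r)) (𝓝[>] 0) (𝓝 ∞) := by
    refine (ENNReal.inv_zero ▸ tendsto_inv_iff.2 hzero).congr' ?_
    filter_upwards [hfin_ball, self_mem_nhdsWithin] with r hr (hr_pos : 0 < r)
    exact ENNReal.inv_div (.inl hr) (.inl (measure_closedBall_pos ν x hr_pos).ne')
  exact hfin.ne (tendsto_nhds_unique hlim hinf)

/-- Every Radon measure `μ` on `ℝⁿ` is asymptotically doubling in a weak sense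
`μ`-a.e.: with
`A_μ = {x ∈ supp μ : limsup_{r→0⁺} μ(B_r(x))/μ(B_{2r}(x)) ≥ 2^{−n}}`,
one has `μ(ℝⁿ \ A_μ) = 0`. -/
theorem measure_asymptotically_doubling {n : ℕ}
    (μ : Measure (EuclideanSpace ℝ (Fin n))) [IsLocallyFiniteMeasure μ] :
    μ ({x : EuclideanSpace ℝ (Fin n) |
        (∀ r : ℝ, 0 < r → 0 < μ (Metric.ball x r)) ∧
        ((2 : ℝ≥0∞) ^ n)⁻¹ ≤
          Filter.limsup (fun r : ℝ => μ (Metric.ball x r) / μ (Metric.ball x (2 * r)))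
            (𝓝[>] (0 : ℝ))}ᶜ) = 0 := by
  have hnull := measure_eq_zero_iff_ae_notMem.1 <|
    measure_setOf_tendsto_measure_closedBall_div_zero μ volume
  refine measure_eq_zero_iff_ae_notMem.2 ?_
  filter_upwards [μ.support_mem_ae, hnull] with x hsupp hx
  refine not_not.2 ⟨nhds_basis_ball.mem_measureSupport.1 hsupp, not_lt.1 fun hlt => hx ?_⟩
  exact tendsto_measure_closedBall_div_addHaar_zero volume μ x (by simpa using hlt)
end

section
/- Let ν be a positive Radon measure on the torus 𝕋ⁿ whose singular part ν^s satisfies ν^s(B_r(x)) ≤ N r^δ for some δ > 0, N > 0, all r ∈ (0,1), and all x ∈ 𝕋ⁿ. Then the restricted fractional maximal function 𝑀̃ν^s(x) = sup_{0<R<1} R^{−(n−1)} ν^s(B_R(x)) satisfies ‖𝑀̃ν^s‖_{L^{n/(n−1)}(𝕋ⁿ)} ≤ C(n,δ)(ν^s(𝕋ⁿ) + N). -/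
/-!
Split the radii into dyadic shells `2^{-k-1} < R ≤ 2^{-k}`. On the `k`-th shell
`ν(B_R(x)) / R^{n-1} ≤ 2^{(k+1)(n-1)} ν(B_{2^{-k}}(x))`, so with `p = n/(n-1)` the `p`-th power of
the maximal function is dominated by the sum over `k` of the `p`-th powers of these terms.
Writing `r = 2^{-k}` and `K = ν(𝕋ⁿ) + N`, the decay hypothesis gives `ν(B_r) ≤ K r^δ`, hence
`∫ ν(B_r(x))^p dx ≤ (K r^δ)^{p-1} ∫ ν(B_r(x)) dx ≤ (K r^δ)^{p-1} K (2r)^n` by Fubini.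
Since `(2^{(k+1)(n-1)})^p (2r)^n = 4^n` does not depend on `k`, what remains is the geometric
series `∑ 2^{-kδ(p-1)}`.
-/

open MeasureTheory Metric
open scoped ENNReal

lemma lintegral_rpow_le_of_le {α : Type*} [MeasurableSpace α] {μ : Measure α} {f : α → ℝ≥0∞}
    {b : ℝ≥0∞} {p : ℝ} (hp : 1 ≤ p) (hb : b ≠ ⊤) (hf : ∀ x, f x ≤ b) :
    ∫⁻ x, f x ^ p ∂μ ≤ b ^ (p - 1) * ∫⁻ x, f x ∂μ := by
  have hsplit : ∀ x, f x ^ p = f x ^ (p - 1) * f x := fun x => by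
    simpa using ENNReal.rpow_add_of_nonneg (x := f x) (p - 1) 1 (by linarith) zero_le_one
  calc ∫⁻ x, f x ^ p ∂μ ≤ ∫⁻ x, b ^ (p - 1) * f x ∂μ := lintegral_mono fun x => by
        rw [hsplit]; gcongr; exact hf x
    _ = b ^ (p - 1) * ∫⁻ x, f x ∂μ :=
        lintegral_const_mul' _ _ (ENNReal.rpow_ne_top_of_nonneg (by linarith) hb)

lemma integral_le_of_lintegral_ofReal_le {α : Type*} [MeasurableSpace α] {μ : Measure α}
    {f : α → ℝ} {b : ℝ} (hf : ∀ x, 0 ≤ f x) (hb : 0 ≤ b)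
    (h : ∫⁻ x, ENNReal.ofReal (f x) ∂μ ≤ ENNReal.ofReal b) : ∫ x, f x ∂μ ≤ b := by
  by_cases hint : Integrable f μ
  · rw [integral_eq_lintegral_of_nonneg_ae (.of_forall hf) hint.aestronglyMeasurable]
    exact ENNReal.toReal_le_of_le_ofReal hb h
  · rw [integral_undef hint]
    exact hb

lemma rpow_integral_rpow_le_of_lintegral_le {α : Type*} [MeasurableSpace α] {μ : Measure α}
    {f : α → ℝ} {p D K : ℝ} (hp : 0 < p) (hf : ∀ x, 0 ≤ f x) (hD : 0 ≤ D) (hK : 0 ≤ K)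
    (h : ∫⁻ x, ENNReal.ofReal (f x ^ p) ∂μ ≤ ENNReal.ofReal (D * K ^ p)) :
    (∫ x, f x ^ p ∂μ) ^ p⁻¹ ≤ D ^ p⁻¹ * K :=
  calc (∫ x, f x ^ p ∂μ) ^ p⁻¹ ≤ (D * K ^ p) ^ p⁻¹ :=
        Real.rpow_le_rpow (integral_nonneg fun x => Real.rpow_nonneg (hf x) p)
          (integral_le_of_lintegral_ofReal_le (fun x => Real.rpow_nonneg (hf x) p)
            (by positivity) h) (inv_nonneg.2 hp.le)
    _ = D ^ p⁻¹ * K := by rw [Real.mul_rpow hD (by positivity), Real.rpow_rpow_inv hK hp.ne']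

lemma ofReal_iSup_rpow_le_tsum {ι : Type*} {g : ι → ℝ} {a : ℕ → ℝ≥0∞} {p : ℝ} (hp : 0 < p)
    (hg : ∀ i, 0 ≤ g i) (h : ∀ i, ∃ k, ENNReal.ofReal (g i) ≤ a k) :
    ENNReal.ofReal ((⨆ i, g i) ^ p) ≤ ∑' k, a k ^ p := by
  set S := ∑' k, a k ^ p
  rcases eq_or_ne S ⊤ with hS | hS
  · exact hS ▸ le_top
  have hST : S ^ p⁻¹ ≠ ⊤ := ENNReal.rpow_ne_top_of_nonneg (inv_nonneg.2 hp.le) hS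
  have ha : ∀ k, a k ≤ S ^ p⁻¹ := fun k => by
    simpa [← ENNReal.rpow_mul, hp.ne'] using
      ENNReal.rpow_le_rpow (ENNReal.le_tsum (f := fun k => a k ^ p) k) (inv_nonneg.2 hp.le)
  have hsup : ⨆ i, g i ≤ (S ^ p⁻¹).toReal := Real.iSup_le (fun i => by
      obtain ⟨k, hk⟩ := h i
      exact (ENNReal.ofReal_le_iff_le_toReal hST).1 (hk.trans (ha k))) ENNReal.toReal_nonneg
  calc ENNReal.ofReal ((⨆ i, g i) ^ p) = ENNReal.ofReal (⨆ i, g i) ^ p :=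
        (ENNReal.ofReal_rpow_of_nonneg (Real.iSup_nonneg hg) hp.le).symm
    _ ≤ (S ^ p⁻¹) ^ p := by
        gcongr
        exact ENNReal.ofReal_le_of_le_toReal hsup
    _ = S := by rw [← ENNReal.rpow_mul, inv_mul_cancel₀ hp.ne', ENNReal.rpow_one]

section BallMeasures

variable {X : Type*} [PseudoMetricSpace X] [MeasurableSpace X] [BorelSpace X]
  [SecondCountableTopology X]

lemma measurableSet_dist_lt (r : ℝ) : MeasurableSet {q : X × X | dist q.2 q.1 < r} :=
  (isOpen_lt (continuous_snd.dist continuous_fst) continuous_const).measurableSet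

lemma measurable_measure_ball (ν : Measure X) [SFinite ν] (r : ℝ) :
    Measurable fun x => ν (ball x r) :=
  measurable_measure_prodMk_left (measurableSet_dist_lt r)

lemma lintegral_measure_ball_comm (μ ν : Measure X) [SFinite μ] [SFinite ν] (r : ℝ) :
    ∫⁻ x, ν (ball x r) ∂μ = ∫⁻ y, μ (ball y r) ∂ν :=
  calc ∫⁻ x, ν (ball x r) ∂μ = μ.prod ν {q | dist q.2 q.1 < r} :=
        (Measure.prod_apply (measurableSet_dist_lt r)).symm
    _ = ∫⁻ y, μ (ball y r) ∂ν := by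
        rw [Measure.prod_apply_symm (measurableSet_dist_lt r)]
        exact lintegral_congr fun y => congr_arg μ (Set.ext fun x => by simp [dist_comm])

lemma lintegral_measure_ball_le (μ ν : Measure X) [SFinite μ] [SFinite ν] {r : ℝ} {V : ℝ≥0∞}
    (hV : ∀ y, μ (ball y r) ≤ V) :
    ∫⁻ x, ν (ball x r) ∂μ ≤ ν Set.univ * V := by
  rw [lintegral_measure_ball_comm, mul_comm, ← lintegral_const]
  exact lintegral_mono hV

end BallMeasures

lemma AddCircle.volume_pi_ball_le {ι : Type*} [Fintype ι] {T : ℝ} [Fact (0 < T)]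
    (y : ι → AddCircle T) {r : ℝ} (hr : 0 ≤ r) :
    volume (ball y r) ≤ ENNReal.ofReal (2 * r) ^ Fintype.card ι :=
  calc volume (ball y r) ≤ volume (closedBall y r) := measure_mono ball_subset_closedBall
    _ = ∏ i, volume (closedBall (y i) r) := by rw [closedBall_pi _ hr, volume_pi_pi]
    _ ≤ ∏ _i : ι, ENNReal.ofReal (2 * r) := Finset.prod_le_prod' fun i _ => by
        rw [AddCircle.volume_closedBall]
        exact ENNReal.ofReal_le_ofReal (min_le_right _ _)
    _ = ENNReal.ofReal (2 * r) ^ Fintype.card ι := by rw [Finset.prod_const, Finset.card_univ]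

section FractionalMaximal

variable {X : Type*} [PseudoMetricSpace X] [MeasurableSpace X]

/-- The paper's `𝑀̃ν` is `restrictedFractionalMaximal (n - 1) ν`. -/
noncomputable def restrictedFractionalMaximal (m : ℕ) (ν : Measure X) (x : X) : ℝ :=
  ⨆ R : Set.Ioo (0 : ℝ) 1, (ν (ball x R)).toReal / (R : ℝ) ^ m

lemma exists_ofReal_measure_ball_div_pow_le (ν : Measure X) [IsFiniteMeasure ν] (m : ℕ)
    (x : X) {R : ℝ} (hR₀ : 0 < R) (hR₁ : R ≤ 1) :
    ∃ k : ℕ, ENNReal.ofReal ((ν (ball x R)).toReal / R ^ m)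
      ≤ ENNReal.ofReal (((2 : ℝ) ^ (k + 1)) ^ m) * ν (ball x ((1 / 2) ^ k)) := by
  obtain ⟨k, hk₁, hk₂⟩ :=
    exists_nat_pow_near_of_lt_one hR₀ hR₁ (by norm_num : (0 : ℝ) < 1 / 2) (by norm_num)
  refine ⟨k, ?_⟩
  have hle : (ν (ball x R)).toReal / R ^ m
      ≤ ((2 : ℝ) ^ (k + 1)) ^ m * (ν (ball x ((1 / 2) ^ k))).toReal :=
    calc (ν (ball x R)).toReal / R ^ m
        ≤ (ν (ball x ((1 / 2) ^ k))).toReal / ((1 / 2 : ℝ) ^ (k + 1)) ^ m := by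
          gcongr
          exact measure_ne_top ν _
      _ = ((2 : ℝ) ^ (k + 1)) ^ m * (ν (ball x ((1 / 2) ^ k))).toReal := by
          rw [div_eq_mul_inv, mul_comm, one_div, inv_pow, inv_pow, inv_inv]
  calc ENNReal.ofReal ((ν (ball x R)).toReal / R ^ m)
      ≤ ENNReal.ofReal (((2 : ℝ) ^ (k + 1)) ^ m * (ν (ball x ((1 / 2) ^ k))).toReal) :=
        ENNReal.ofReal_le_ofReal hle
    _ = _ := by rw [ENNReal.ofReal_mul (by positivity), ENNReal.ofReal_toReal (measure_ne_top ν _)]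

lemma ofReal_restrictedFractionalMaximal_rpow_le (ν : Measure X) [IsFiniteMeasure ν] (m : ℕ)
    {p : ℝ} (hp : 0 < p) (x : X) :
    ENNReal.ofReal (restrictedFractionalMaximal m ν x ^ p)
      ≤ ∑' k : ℕ, (ENNReal.ofReal (((2 : ℝ) ^ (k + 1)) ^ m) * ν (ball x ((1 / 2) ^ k))) ^ p :=
  ofReal_iSup_rpow_le_tsum hp (fun R => div_nonneg ENNReal.toReal_nonneg (pow_nonneg R.2.1.le _))
    fun R => exists_ofReal_measure_ball_div_pow_le ν m x R.2.1 R.2.2.le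

lemma measure_ball_le_of_decay (ν : Measure X) [IsFiniteMeasure ν] {N δ : ℝ} (hN : 0 ≤ N)
    (hdecay : ∀ x r, 0 < r → r < 1 → (ν (ball x r)).toReal ≤ N * r ^ δ)
    (x : X) {r : ℝ} (hr₀ : 0 < r) (hr₁ : r ≤ 1) :
    ν (ball x r) ≤ ENNReal.ofReal (((ν Set.univ).toReal + N) * r ^ δ) := by
  rw [← ENNReal.ofReal_toReal (measure_ne_top ν (ball x r))]
  refine ENNReal.ofReal_le_ofReal ?_
  rcases hr₁.lt_or_eq with hr₁ | rfl
  · nlinarith [hdecay x r hr₀ hr₁, Real.rpow_nonneg hr₀.le δ, (ν Set.univ).toReal_nonneg]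
  · rw [Real.one_rpow, mul_one]
    linarith [ENNReal.toReal_mono (measure_ne_top ν _) (measure_mono (Set.subset_univ (ball x 1)))]

end FractionalMaximal

lemma dyadic_weight_rpow_mul_pow {n : ℕ} (hn : 2 ≤ n) (k : ℕ) :
    (((2 : ℝ) ^ (k + 1)) ^ (n - 1)) ^ ((n : ℝ) / (n - 1)) * (2 * (1 / 2) ^ k) ^ n = 4 ^ n := by
  have hexp : ((n - 1 : ℕ) : ℝ) * ((n : ℝ) / (n - 1)) = n := by
    have : (1 : ℝ) < n := by exact_mod_cast hn
    rw [Nat.cast_sub (by omega), Nat.cast_one]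
    field_simp [(sub_pos.2 this).ne']
  rw [← Real.rpow_natCast_mul (by positivity), hexp, Real.rpow_natCast, ← mul_pow]
  congr 1
  rw [pow_succ, one_div, inv_pow]
  field_simp
  norm_num

section Torus

variable {n : ℕ} {T : ℝ} [Fact (0 < T)] (ν : Measure (Fin n → AddCircle T)) [IsFiniteMeasure ν]
  {N δ : ℝ}

lemma lintegral_dyadic_term_rpow_le (hn : 2 ≤ n) (hN : 0 ≤ N)
    (hdecay : ∀ x r, 0 < r → r < 1 → (ν (ball x r)).toReal ≤ N * r ^ δ) (k : ℕ) :
    ∫⁻ x, (ENNReal.ofReal (((2 : ℝ) ^ (k + 1)) ^ (n - 1)) * ν (ball x ((1 / 2) ^ k)))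
        ^ ((n : ℝ) / (n - 1))
      ≤ ENNReal.ofReal (4 ^ n * ((1 / 2 : ℝ) ^ (δ * ((n : ℝ) / (n - 1) - 1))) ^ k
          * ((ν Set.univ).toReal + N) ^ ((n : ℝ) / (n - 1))) := by
  set p : ℝ := (n : ℝ) / (n - 1)
  set r : ℝ := (1 / 2) ^ k
  set K : ℝ := (ν Set.univ).toReal + N
  set c : ℝ := ((2 : ℝ) ^ (k + 1)) ^ (n - 1)
  have hn' : (2 : ℝ) ≤ n := by exact_mod_cast hn
  have hp : 1 ≤ p := (one_le_div (by linarith)).2 (by linarith)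
  have hr : 0 < r := by positivity
  have hK : 0 ≤ K := by positivity
  have hball : ∀ x, ν (ball x r) ≤ ENNReal.ofReal (K * r ^ δ) := fun x =>
    measure_ball_le_of_decay ν hN hdecay x hr (pow_le_one₀ (by norm_num) (by norm_num))
  have hvol : ∀ y : Fin n → AddCircle T, volume (ball y r) ≤ ENNReal.ofReal (2 * r) ^ n :=
    fun y => by simpa using AddCircle.volume_pi_ball_le y hr.le
  have hdecay_rpow : (r ^ δ) ^ (p - 1) = ((1 / 2 : ℝ) ^ (δ * (p - 1))) ^ k := by
    rw [← Real.rpow_mul hr.le, Real.rpow_pow_comm (by norm_num)]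
  calc ∫⁻ x, (ENNReal.ofReal c * ν (ball x r)) ^ p
      = ENNReal.ofReal c ^ p * ∫⁻ x, ν (ball x r) ^ p := by
        simp_rw [ENNReal.mul_rpow_of_nonneg _ _ (by linarith : 0 ≤ p)]
        exact lintegral_const_mul' _ _
          (ENNReal.rpow_ne_top_of_nonneg (by linarith) ENNReal.ofReal_ne_top)
    _ ≤ ENNReal.ofReal c ^ p * (ENNReal.ofReal (K * r ^ δ) ^ (p - 1) * ∫⁻ x, ν (ball x r)) := by
        gcongr
        exact lintegral_rpow_le_of_le hp ENNReal.ofReal_ne_top hball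
    _ ≤ ENNReal.ofReal c ^ p * (ENNReal.ofReal (K * r ^ δ) ^ (p - 1) *
          (ENNReal.ofReal K * ENNReal.ofReal (2 * r) ^ n)) := by
        gcongr
        refine (lintegral_measure_ball_le volume ν hvol).trans ?_
        gcongr
        rw [← ENNReal.ofReal_toReal (measure_ne_top ν Set.univ)]
        exact ENNReal.ofReal_le_ofReal (by linarith)
    _ = ENNReal.ofReal (c ^ p * (2 * r) ^ n * ((r ^ δ) ^ (p - 1) * (K ^ (p - 1) * K))) := by
        rw [ENNReal.ofReal_rpow_of_nonneg (by positivity) (by linarith),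
          ENNReal.ofReal_rpow_of_nonneg (by positivity) (by linarith),
          ← ENNReal.ofReal_pow (by positivity), ← ENNReal.ofReal_mul hK,
          ← ENNReal.ofReal_mul (by positivity), ← ENNReal.ofReal_mul (by positivity),
          Real.mul_rpow hK (by positivity)]
        ring_nf
    _ = _ := by
        rw [show c ^ p * (2 * r) ^ n = 4 ^ n from dyadic_weight_rpow_mul_pow hn k, hdecay_rpow,
          ← Real.rpow_add_one' hK (by linarith), sub_add_cancel, mul_assoc]

lemma lintegral_ofReal_restrictedFractionalMaximal_rpow_le (hn : 2 ≤ n) (hδ : 0 < δ)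
    (hN : 0 ≤ N) (hdecay : ∀ x r, 0 < r → r < 1 → (ν (ball x r)).toReal ≤ N * r ^ δ) :
    ∫⁻ x, ENNReal.ofReal (restrictedFractionalMaximal (n - 1) ν x ^ ((n : ℝ) / (n - 1)))
      ≤ ENNReal.ofReal (4 ^ n * (1 - (1 / 2 : ℝ) ^ (δ * ((n : ℝ) / (n - 1) - 1)))⁻¹
          * ((ν Set.univ).toReal + N) ^ ((n : ℝ) / (n - 1))) := by
  set p : ℝ := (n : ℝ) / (n - 1)
  set a : ℝ := (1 / 2 : ℝ) ^ (δ * (p - 1))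
  have hn' : (2 : ℝ) ≤ n := by exact_mod_cast hn
  have hp : 1 < p := (one_lt_div (by linarith)).2 (by linarith)
  have ha : a < 1 := Real.rpow_lt_one (by norm_num) (by norm_num) (by nlinarith)
  calc ∫⁻ x, ENNReal.ofReal (restrictedFractionalMaximal (n - 1) ν x ^ p)
      ≤ ∫⁻ x, ∑' k : ℕ,
          (ENNReal.ofReal (((2 : ℝ) ^ (k + 1)) ^ (n - 1)) * ν (ball x ((1 / 2) ^ k))) ^ p :=
        lintegral_mono fun x => ofReal_restrictedFractionalMaximal_rpow_le ν _ (by linarith) x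
    _ = ∑' k : ℕ, ∫⁻ x,
          (ENNReal.ofReal (((2 : ℝ) ^ (k + 1)) ^ (n - 1)) * ν (ball x ((1 / 2) ^ k))) ^ p :=
        lintegral_tsum fun k =>
          (((measurable_measure_ball ν _).const_mul _).pow_const _).aemeasurable
    _ ≤ ∑' k : ℕ, ENNReal.ofReal (4 ^ n * a ^ k * ((ν Set.univ).toReal + N) ^ p) :=
        ENNReal.tsum_le_tsum (lintegral_dyadic_term_rpow_le ν hn hN hdecay)
    _ = _ := by
        rw [← ENNReal.ofReal_tsum_of_nonneg (fun k => by positivity)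
          (((summable_geometric_of_lt_one (by positivity) ha).mul_left _).mul_right _),
          tsum_mul_right, tsum_mul_left, tsum_geometric_of_lt_one (by positivity) ha]

end Torus

/-- Let `ν` be a positive measure on the torus `𝕋ⁿ` (a singular part) satisfying
`ν(B_r(x)) ≤ N r^δ` for some `δ > 0`, `N > 0`, all `r ∈ (0,1)` and all `x`.  Then the
restricted fractional maximal function `𝑀̃ν(x) = sup_{0<R<1} R^{−(n−1)} ν(B_R(x))`
satisfies `‖𝑀̃ν‖_{L^{n/(n−1)}(𝕋ⁿ)} ≤ C(n,δ)(ν(𝕋ⁿ) + N)`. -/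
theorem fractional_maximal_bound_of_decay (n : ℕ) (hn : 2 ≤ n) (δ : ℝ) (hδ : 0 < δ) :
    ∃ C > (0 : ℝ),
      ∀ (ν : Measure (Fin n → AddCircle (1 : ℝ))) (_ : IsFiniteMeasure ν) (N : ℝ),
        0 < N →
        (∀ (x : Fin n → AddCircle (1 : ℝ)) (r : ℝ), 0 < r → r < 1 →
          (ν (Metric.ball x r)).toReal ≤ N * r ^ δ) →
        (∫ x : Fin n → AddCircle (1 : ℝ),
            (⨆ R : Set.Ioo (0 : ℝ) 1,
              (ν (Metric.ball x (R : ℝ))).toReal / (R : ℝ) ^ (n - 1))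
              ^ ((n : ℝ) / (n - 1))) ^ (((n : ℝ) - 1) / n)
          ≤ C * ((ν Set.univ).toReal + N) := by
  set p : ℝ := n / (n - 1)
  set a : ℝ := (1 / 2) ^ (δ * (p - 1))
  have hn' : (2 : ℝ) ≤ n := by exact_mod_cast hn
  have hp : 1 < p := (one_lt_div (by linarith)).2 (by linarith)
  have ha : a < 1 := Real.rpow_lt_one (by norm_num) (by norm_num) (by nlinarith)
  set D : ℝ := 4 ^ n * (1 - a)⁻¹
  have hD : 0 < D := mul_pos (by positivity) (inv_pos.2 (by linarith))
  refine ⟨D ^ (((n : ℝ) - 1) / n), Real.rpow_pos_of_pos hD _, fun ν _ N hN hdecay => ?_⟩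
  have hbound := rpow_integral_rpow_le_of_lintegral_le (by linarith)
    (fun x => Real.iSup_nonneg fun R => div_nonneg ENNReal.toReal_nonneg (pow_nonneg R.2.1.le _))
    hD.le (by positivity)
    (lintegral_ofReal_restrictedFractionalMaximal_rpow_le ν hn hδ hN.le hdecay)
  rwa [inv_div] at hbound
end

section
/- Let α and β be Radon measures on ℝⁿ with α ⟂ β (mutually singular). Then for β-almost every x, lim_{r→0⁺} α(B̄_r(x))/β(B̄_r(x)) = 0, and α is concentrated on the union of the complement of supp(β) and the set where liminf_{r→0⁺} α(B̄_r(x))/β(B̄_r(x)) = +∞. -/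
open MeasureTheory Filter
open scoped ENNReal Topology

/-!
Besicovitch differentiation gives `α(B̄_r(x))/β(B̄_r(x)) → dα/dβ (x)` for `β`-a.e. `x`, and
`dα/dβ = 0` `β`-a.e. since `α ⟂ β`. Exchanging the roles, `β(B̄_r(x))/α(B̄_r(x)) → 0` for
`α`-a.e. `x`; at such a point in `supp β` both balls have finite, nonzero measure, so the
reciprocal ratio tends to `∞`.
-/

namespace ENNReal

theorem tendsto_div_nhds_top_of_tendsto_div_nhds_zero {ι : Type*} {l : Filter ι}
    {f g : ι → ℝ≥0∞} (hf : ∀ᶠ i in l, f i ≠ ∞) (hg : ∀ᶠ i in l, g i ≠ 0)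
    (h : Tendsto (fun i => g i / f i) l (𝓝 0)) :
    Tendsto (fun i => f i / g i) l (𝓝 ∞) := by
  have hinv : (fun i => (g i / f i)⁻¹) =ᶠ[l] fun i => f i / g i := by
    filter_upwards [hf, hg] with i hfi hgi
    exact ENNReal.inv_div (Or.inl hfi) (Or.inr hgi)
  exact (by simpa using tendsto_inv_iff.2 h : Tendsto _ l (𝓝 ∞)).congr' hinv

end ENNReal

namespace Besicovitch

variable {X : Type*} [MetricSpace X] [MeasurableSpace X] [BorelSpace X]
  [SecondCountableTopology X] [HasBesicovitchCovering X]

theorem ae_tendsto_div_nhds_zero_of_mutuallySingular {ρ μ : Measure X}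
    [IsLocallyFiniteMeasure ρ] [IsLocallyFiniteMeasure μ] (h : ρ.MutuallySingular μ) :
    ∀ᵐ x ∂μ, Tendsto (fun r => ρ (Metric.closedBall x r) / μ (Metric.closedBall x r))
      (𝓝[>] 0) (𝓝 0) := by
  filter_upwards [ae_tendsto_rnDeriv ρ μ, h.rnDeriv_ae_eq_zero] with x hx h0
  rwa [h0] at hx

theorem ae_tendsto_div_nhds_top_of_mutuallySingular [ProperSpace X] {ρ μ : Measure X}
    [IsLocallyFiniteMeasure ρ] [IsLocallyFiniteMeasure μ] (h : ρ.MutuallySingular μ) :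
    ∀ᵐ x ∂ρ, (∀ r > 0, μ (Metric.ball x r) ≠ 0) →
      Tendsto (fun r => ρ (Metric.closedBall x r) / μ (Metric.closedBall x r))
        (𝓝[>] 0) (𝓝 ∞) := by
  filter_upwards [ae_tendsto_div_nhds_zero_of_mutuallySingular h.symm] with x hx hsupp
  refine ENNReal.tendsto_div_nhds_top_of_tendsto_div_nhds_zero
    (Eventually.of_forall fun r => measure_closedBall_lt_top.ne) ?_ hx
  filter_upwards [self_mem_nhdsWithin] with r (hr : 0 < r)
  exact fun h0 => hsupp r hr (measure_mono_null Metric.ball_subset_closedBall h0)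

end Besicovitch

/-- Let `α ⟂ β` be mutually singular Radon measures on `ℝⁿ`.  Then for `β`-a.e. `x`,
`lim_{r→0⁺} α(B̄_r(x))/β(B̄_r(x)) = 0`, and `α` is concentrated on the union of the
complement of `supp β` and the set where `liminf_{r→0⁺} α(B̄_r(x))/β(B̄_r(x)) = +∞`. -/
theorem mutually_singular_density_zero {n : ℕ}
    (α β : Measure (EuclideanSpace ℝ (Fin n)))
    [IsLocallyFiniteMeasure α] [IsLocallyFiniteMeasure β]
    (h : α.MutuallySingular β) :
    (∀ᵐ x ∂β,
      Tendsto (fun r : ℝ => α (Metric.closedBall x r) / β (Metric.closedBall x r))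
        (𝓝[>] (0 : ℝ)) (𝓝 0)) ∧
    α ({x : EuclideanSpace ℝ (Fin n) |
        (∃ r : ℝ, 0 < r ∧ β (Metric.ball x r) = 0) ∨
        Filter.liminf
          (fun r : ℝ => α (Metric.closedBall x r) / β (Metric.closedBall x r))
          (𝓝[>] (0 : ℝ)) = ⊤}ᶜ) = 0 := by
  refine ⟨Besicovitch.ae_tendsto_div_nhds_zero_of_mutuallySingular h, ?_⟩
  rw [Set.compl_ofPred, ← ae_iff]
  filter_upwards [Besicovitch.ae_tendsto_div_nhds_top_of_mutuallySingular h] with x hx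
  exact or_iff_not_imp_left.2 fun hsupp => (hx (by simpa using hsupp)).liminf_eq
end
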